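/- Let K be a field of characteristic 0 and n ≥ 1. For any X ∈ Matₙ(K) and any t ∈ K, the bilinear multiplication μ on Matₙ(K) defined by μ(a,b) = a·b + t·(tr b)·(X·a − a·X) satisfies the right-symmetric identity: μ(μ(a,b),c) − μ(a,μ(b,c)) = μ(μ(a,c),b) − μ(a,μ(c,b)) for all a,b,c ∈ Matₙ(K). Thus the matrix algebra glₙ admits the nontrivial one-parameter family of right-symmetric deformations (a,b) ↦ a∘b + t·(tr b)·[X,a]. -/

import Mathlib

/-!
Let `D` be a derivation of an associative algebra and `φ` a linear form vanishing on commutators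
and on the image of `D`. In the associator `(a ∘ b) ∘ c - a ∘ (b ∘ c)` of `a ∘ b = a * b + φ b • D a`
the terms `a * b * c` and `φ c • a * D b` cancel by associativity and the Leibniz rule, and what
remains, `φ b • D a * c + φ c • D a * b + (φ b * φ c) • D (D a) - φ (b * c) • D a`, is symmetric
in `b` and `c`. On `glₙ` take `D = [X, -]` and `φ = t • tr`.
-/

/-- The deformed multiplication `μ(a,b) = a·b + t·(tr b)·[X,a]` on `glₙ`. -/
def glDefMul {K : Type*} [Field K] (n : ℕ) (X : Matrix (Fin n) (Fin n) K) (t : K)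
    (a b : Matrix (Fin n) (Fin n) K) : Matrix (Fin n) (Fin n) K :=
  a * b + (t * b.trace) • (X * a - a * X)

section DeformedMul

variable {R A : Type*} [CommRing R] [Ring A] [Algebra R A] (D : A →ₗ[R] A) (φ : A →ₗ[R] R)

def deformedMul (a b : A) : A :=
  a * b + φ b • D a

variable {D φ}

theorem deformedMul_associator (hD : ∀ a b, D (a * b) = D a * b + a * D b)
    (hφD : ∀ a, φ (D a) = 0) (a b c : A) :
    deformedMul D φ (deformedMul D φ a b) c - deformedMul D φ a (deformedMul D φ b c)
      = φ b • (D a * c) + φ c • (D a * b) + (φ b * φ c) • D (D a) - φ (b * c) • D a := by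
  simp only [deformedMul, map_add, map_smul, hD, hφD, smul_eq_mul, mul_zero, add_zero,
    add_mul, mul_add, mul_assoc, smul_mul_assoc, mul_smul_comm, smul_add, smul_smul]
  rw [mul_comm (φ c) (φ b)]
  abel

theorem deformedMul_rightSymmetric (hD : ∀ a b, D (a * b) = D a * b + a * D b)
    (hφD : ∀ a, φ (D a) = 0) (hφ : ∀ a b, φ (a * b) = φ (b * a)) (a b c : A) :
    deformedMul D φ (deformedMul D φ a b) c - deformedMul D φ a (deformedMul D φ b c)
      = deformedMul D φ (deformedMul D φ a c) b - deformedMul D φ a (deformedMul D φ c b) := by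
  rw [deformedMul_associator hD hφD, deformedMul_associator hD hφD, hφ b c, mul_comm (φ b)]
  abel

end DeformedMul

section InnerDerivation

variable (R : Type*) {A : Type*} [CommRing R] [Ring A] [Algebra R A]

def innerDerivation (x : A) : A →ₗ[R] A :=
  LinearMap.mulLeft R x - LinearMap.mulRight R x

variable {R}

@[simp]
theorem innerDerivation_apply (x a : A) : innerDerivation R x a = x * a - a * x := rfl

theorem innerDerivation_mul (x a b : A) :
    innerDerivation R x (a * b) = innerDerivation R x a * b + a * innerDerivation R x b := by
  simp only [innerDerivation_apply]
  noncomm_ring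

end InnerDerivation

theorem glDefMul_eq_deformedMul {K : Type*} [Field K] (n : ℕ) (X : Matrix (Fin n) (Fin n) K)
    (t : K) :
    glDefMul n X t =
      deformedMul (innerDerivation K X) (t • Matrix.traceLinearMap (Fin n) K K) := by
  ext a b : 2
  simp [glDefMul, deformedMul]

theorem glDefMul_rightSymmetric
    {K : Type*} [Field K] (n : ℕ)
    (X : Matrix (Fin n) (Fin n) K) (t : K) :
    ∀ a b c : Matrix (Fin n) (Fin n) K,
      glDefMul n X t (glDefMul n X t a b) c - glDefMul n X t a (glDefMul n X t b c)
        = glDefMul n X t (glDefMul n X t a c) b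
          - glDefMul n X t a (glDefMul n X t c b) := by
  rw [glDefMul_eq_deformedMul]
  refine deformedMul_rightSymmetric (innerDerivation_mul X) (fun a => ?_) (fun a b => ?_)
  · simp [Matrix.trace_mul_comm X a]
  · simp [Matrix.trace_mul_comm a b]
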